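/- arXiv:0906.3159 — 2 statements merged into one kernel-verified Lean document; each statement's English description precedes it below -/
import Mathlib

section
/- Let f, g, h, k be self-maps of a metric space (X,d) such that the pairs (f,h) and (g,k) are each subcompatible and subsequentially continuous with a common witnessing sequence. Suppose there are α ≥ 0 and β ∈ (0,1) such that for all x, y ∈ X: d(fx,gy)·(1 + α·d(hx,ky)) ≤ α · max{ d(hx,fx)·d(gy,ky), d(hx,gy)·d(ky,fx) } + β · max{ d(hx,ky), d(hx,fx), d(gy,ky), (d(hx,gy)+d(ky,fx))/2 }. Then f, g, h and k have a unique common fixed point. -/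
/-!
Subcompatibility together with subsequential continuity turns the limit point `t` of the
witnessing sequence of `(f, h)` into a coincidence point, `f t = h t`, and likewise `g s = k s`.
Passing to the limit in the contractive condition along these sequences (or along one of them
and a constant sequence), every comparison needed takes the form `d (1 + α d) ≤ α d² + β d`,
which forces `d = 0` because `β < 1`. This gives in turn `t = s`, `f t = t`, `g t = t`, and
uniqueness of the common fixed point.
-/

open Filter Topology NNReal

/-- The pair `(f, g)` of self-maps of a metric space is subcompatible and
subsequentially continuous with a common witnessing sequence: there is a
sequence `x` and a point `t` with `lim f xₙ = lim g xₙ = t`,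
`lim d(f (g xₙ), g (f xₙ)) = 0`, `lim f (g xₙ) = f t` and `lim g (f xₙ) = g t`. -/
def SubcompSubseqCont {X : Type*} [MetricSpace X] (f g : X → X) : Prop :=
  ∃ (x : ℕ → X) (t : X),
    Tendsto (fun n => f (x n)) atTop (𝓝 t) ∧
    Tendsto (fun n => g (x n)) atTop (𝓝 t) ∧
    Tendsto (fun n => dist (f (g (x n))) (g (f (x n)))) atTop (𝓝 (0 : ℝ)) ∧
    Tendsto (fun n => f (g (x n))) atTop (𝓝 (f t)) ∧
    Tendsto (fun n => g (f (x n))) atTop (𝓝 (g t))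

section

variable {X : Type*} [MetricSpace X]

/-- The contractive condition at `x, y` is `RationalBound α β (f x) (g y) (h x) (k y)`. -/
def RationalBound (α β : ℝ) (a b c e : X) : Prop :=
  dist a b * (1 + α * dist c e) ≤
    α * max (dist c a * dist b e) (dist c b * dist e a) +
    β * max (max (max (dist c e) (dist c a)) (dist b e)) ((dist c b + dist e a) / 2)

theorem RationalBound.of_tendsto {α β : ℝ} {F G H K : ℕ → X} {a b c e : X}
    (hF : Tendsto F atTop (𝓝 a)) (hG : Tendsto G atTop (𝓝 b))
    (hH : Tendsto H atTop (𝓝 c)) (hK : Tendsto K atTop (𝓝 e))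
    (hbound : ∀ n, RationalBound α β (F n) (G n) (H n) (K n)) :
    RationalBound α β a b c e := by
  have hclosed : IsClosed {p : X × X × X × X | RationalBound α β p.1 p.2.1 p.2.2.1 p.2.2.2} :=
    isClosed_le (by fun_prop) (by fun_prop)
  exact hclosed.mem_of_tendsto (hF.prodMk_nhds (hG.prodMk_nhds (hH.prodMk_nhds hK)))
    (Eventually.of_forall hbound)

theorem RationalBound.eq {α β : ℝ} (hβ : β < 1) {a b : X} (hab : RationalBound α β a b a b) :
    a = b := by
  have hd : 0 ≤ dist a b := dist_nonneg
  have hbound : dist a b * (1 + α * dist a b) ≤ α * (dist a b * dist a b) + β * dist a b := by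
    simpa only [RationalBound, dist_self, zero_mul, dist_comm b a, add_self_div_two,
      max_eq_right (mul_self_nonneg (dist a b)), max_eq_left hd, max_self] using hab
  exact dist_eq_zero.mp (by nlinarith)

theorem SubcompSubseqCont.exists_coincidence {f h : X → X} (hfh : SubcompSubseqCont f h) :
    ∃ (x : ℕ → X) (t : X), Tendsto (fun n => f (x n)) atTop (𝓝 t) ∧
      Tendsto (fun n => h (x n)) atTop (𝓝 t) ∧ f t = h t := by
  obtain ⟨x, t, hfx, hhx, hcomm, hfhx, hhfx⟩ := hfh
  exact ⟨x, t, hfx, hhx, dist_eq_zero.mp (tendsto_nhds_unique (hfhx.dist hhfx) hcomm)⟩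

end

theorem common_fixed_point_rational_type_general {X : Type*} [MetricSpace X]
    (f g h k : X → X)
    (hfh : SubcompSubseqCont f h) (hgk : SubcompSubseqCont g k)
    (α β : ℝ) (hβ1 : β < 1)
    (hineq : ∀ x y : X,
      dist (f x) (g y) * (1 + α * dist (h x) (k y)) ≤
        α * max (dist (h x) (f x) * dist (g y) (k y))
          (dist (h x) (g y) * dist (k y) (f x)) +
        β * max (max (max (dist (h x) (k y)) (dist (h x) (f x)))
          (dist (g y) (k y))) ((dist (h x) (g y) + dist (k y) (f x)) / 2)) :
    ∃! t : X, f t = t ∧ g t = t ∧ h t = t ∧ k t = t := by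
  obtain ⟨x, t, hfx, hhx, hft⟩ := hfh.exists_coincidence
  obtain ⟨y, s, hgy, hky, hgs⟩ := hgk.exists_coincidence
  obtain rfl : t = s :=
    (RationalBound.of_tendsto hfx hgy hhx hky fun n => hineq (x n) (y n)).eq hβ1
  have hf : f t = t := by
    have hlim := RationalBound.of_tendsto tendsto_const_nhds hgy tendsto_const_nhds hky
      fun n => hineq t (y n)
    rw [← hft] at hlim
    exact hlim.eq hβ1
  have hg : g t = t := by
    have hlim := RationalBound.of_tendsto hfx tendsto_const_nhds hhx tendsto_const_nhds
      fun n => hineq (x n) t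
    rw [← hgs] at hlim
    exact (hlim.eq hβ1).symm
  refine ⟨t, ⟨hf, hg, hft ▸ hf, hgs ▸ hg⟩, fun u ⟨hfu, _, hhu, _⟩ => ?_⟩
  have hut := hineq u t
  rw [hfu, hhu, hg, ← hgs, hg] at hut
  exact RationalBound.eq hβ1 hut

theorem common_fixed_point_rational_type {X : Type*} [MetricSpace X]
    (f g h k : X → X)
    (hfh : SubcompSubseqCont f h) (hgk : SubcompSubseqCont g k)
    (α β : ℝ) (hα : 0 ≤ α) (hβ0 : 0 < β) (hβ1 : β < 1)
    (hineq : ∀ x y : X,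
      dist (f x) (g y) * (1 + α * dist (h x) (k y)) ≤
        α * max (dist (h x) (f x) * dist (g y) (k y))
          (dist (h x) (g y) * dist (k y) (f x)) +
        β * max (max (max (dist (h x) (k y)) (dist (h x) (f x)))
          (dist (g y) (k y))) ((dist (h x) (g y) + dist (k y) (f x)) / 2)) :
    ∃! t : X, f t = t ∧ g t = t ∧ h t = t ∧ k t = t :=
  common_fixed_point_rational_type_general f g h k hfh hgk α β hβ1 hineq
end

section
/- Let f, g, h be self-maps of a metric space (X,d) such that the pairs (f,h) and (g,h) are each subcompatible and subsequentially continuous with a common witnessing sequence. Let 0 < a < 1, α, β ∈ (0,1], p a positive integer, and F : ℝ₊ → ℝ₊ upper semicontinuous with F(t) < t for every t > 0. Suppose that for all x, y ∈ X: d(fx,gy)^p ≤ F( a·d(hx,hy)^p + (1−a)·max{ α·d(fx,hx)^p, β·d(gy,hy)^p, d(fx,hx)^{p/2}·d(fx,hy)^{p/2}, d(fx,hy)^{p/2}·d(hx,gy)^{p/2}, (d(fx,hx)^p + d(gy,hy)^p)/2 } ). Then f, g and h have a unique common fixed point. -/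
open Filter Topology NNReal

/-!
The limit `t` of a witnessing sequence of `(f, h)` is a coincidence point, `f t = h t`, and so is
the limit `u` of a witnessing sequence of `(g, h)`. Applying the contractive condition to `xₙ`
and `u` and passing to the limit with the upper semicontinuity of `F` gives `d(t, hu)^p ≤ F(…)`
whose argument collapses to `d(t, hu)^p`; as `F s < s` for `s > 0`, this forces `hu = t`.
The same collapse at the pairs `(t, u)` and `(s, t)` yields `ft = t` and uniqueness. At `(t, t)`
the argument becomes `(1 - a) max(β d(gt, t)^p, d(gt, t)^p / 2)`, which is positive and at most
`d(gt, t)^p` when `gt ≠ t`.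
-/

theorem SubcompSubseqCont.exists_tendsto_coincidence {X : Type*} [MetricSpace X] {f g : X → X}
    (hfg : SubcompSubseqCont f g) :
    ∃ (x : ℕ → X) (t : X), Tendsto (fun n => f (x n)) atTop (𝓝 t) ∧
      Tendsto (fun n => g (x n)) atTop (𝓝 t) ∧ f t = g t := by
  obtain ⟨x, t, hfx, hgx, hcomm, hfgx, hgfx⟩ := hfg
  exact ⟨x, t, hfx, hgx, dist_eq_zero.mp (tendsto_nhds_unique (hfgx.dist hgfx) hcomm)⟩

theorem UpperSemicontinuous.le_of_tendsto {ι β γ : Type*} [TopologicalSpace β] [LinearOrder γ]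
    [DenselyOrdered γ] [TopologicalSpace γ] [OrderTopology γ] {F : β → γ}
    (hF : UpperSemicontinuous F) {l : Filter ι} [l.NeBot] {u : ι → γ} {v : ι → β} {c : γ}
    {b : β} (hu : Tendsto u l (𝓝 c)) (hv : Tendsto v l (𝓝 b)) (h : ∀ᶠ i in l, u i ≤ F (v i)) :
    c ≤ F b := by
  by_contra! hlt
  obtain ⟨z, hFz, hzc⟩ := exists_between hlt
  have hle : ∀ᶠ i in l, u i ≤ z :=
    (h.and (hv.eventually (hF b z hFz))).mono fun i hi => hi.1.trans hi.2.le
  exact (_root_.le_of_tendsto hu hle).not_gt hzc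

theorem eq_zero_of_le_apply {F : ℝ≥0 → ℝ≥0} (hF : ∀ s, 0 < s → F s < s) {w : ℝ≥0}
    (hw : w ≤ F w) : w = 0 := by
  by_contra h0
  exact (hF w (pos_iff_ne_zero.2 h0)).not_ge hw

theorem NNReal.rpow_half_mul_rpow_half (c : ℝ≥0) (p : ℕ) :
    c ^ ((p : ℝ) / 2) * c ^ ((p : ℝ) / 2) = c ^ p := by
  rw [← NNReal.rpow_add_of_nonneg c (by positivity) (by positivity), add_halves,
    NNReal.rpow_natCast]

/-- The argument of `F` in the contractive condition, as a function of
`d(hx, hy), d(fx, hx), d(gy, hy), d(fx, hy), d(hx, gy)`. -/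
noncomputable def gregusBound (a α β : ℝ≥0) (p : ℕ) (d₁ d₂ d₃ d₄ d₅ : ℝ≥0) : ℝ≥0 :=
  a * d₁ ^ p + (1 - a) *
    max (max (max (max (α * d₂ ^ p) (β * d₃ ^ p))
      (d₂ ^ ((p : ℝ) / 2) * d₄ ^ ((p : ℝ) / 2)))
      (d₄ ^ ((p : ℝ) / 2) * d₅ ^ ((p : ℝ) / 2)))
      ((d₂ ^ p + d₃ ^ p) / 2)

section gregusBound

variable {a α β : ℝ≥0} {p : ℕ}

theorem Filter.Tendsto.gregusBound {ι : Type*} {l : Filter ι} {d₁ d₂ d₃ d₄ d₅ : ι → ℝ≥0}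
    {e₁ e₂ e₃ e₄ e₅ : ℝ≥0} (h₁ : Tendsto d₁ l (𝓝 e₁)) (h₂ : Tendsto d₂ l (𝓝 e₂))
    (h₃ : Tendsto d₃ l (𝓝 e₃)) (h₄ : Tendsto d₄ l (𝓝 e₄)) (h₅ : Tendsto d₅ l (𝓝 e₅)) :
    Tendsto (fun i => gregusBound a α β p (d₁ i) (d₂ i) (d₃ i) (d₄ i) (d₅ i)) l
      (𝓝 (gregusBound a α β p e₁ e₂ e₃ e₄ e₅)) := by
  have hq : ∀ {d : ι → ℝ≥0} {e : ℝ≥0}, Tendsto d l (𝓝 e) →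
      Tendsto (fun i => d i ^ ((p : ℝ) / 2)) l (𝓝 (e ^ ((p : ℝ) / 2))) := fun hd =>
    ((NNReal.continuous_rpow_const (by positivity)).tendsto _).comp hd
  refine (tendsto_const_nhds.mul (h₁.pow p)).add (tendsto_const_nhds.mul ?_)
  exact ((((tendsto_const_nhds.mul (h₂.pow p)).max (tendsto_const_nhds.mul (h₃.pow p))).max
    ((hq h₂).mul (hq h₄))).max ((hq h₄).mul (hq h₅))).max
    (((h₂.pow p).add (h₃.pow p)).div_const 2)

theorem gregusBound_diag (hp : p ≠ 0) (ha : a ≤ 1) (e : ℝ≥0) :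
    gregusBound a α β p e 0 0 e e = e ^ p := by
  have hq : ((p : ℝ) / 2) ≠ 0 := by positivity
  simp only [gregusBound, zero_pow hp, NNReal.zero_rpow hq, NNReal.rpow_half_mul_rpow_half,
    mul_zero, zero_mul, add_zero, zero_div, max_self, zero_le, max_eq_right, max_eq_left]
  rw [← add_mul, add_tsub_cancel_of_le ha, one_mul]

theorem gregusBound_zero_zero_le (hp : p ≠ 0) (hβ : β ≤ 1) (e : ℝ≥0) :
    gregusBound a α β p 0 0 e 0 e ≤ e ^ p := by
  have hq : ((p : ℝ) / 2) ≠ 0 := by positivity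
  simp only [gregusBound, zero_pow hp, NNReal.zero_rpow hq, mul_zero, zero_mul, zero_add,
    zero_le, max_eq_right, max_eq_left]
  calc (1 - a) * max (β * e ^ p) (e ^ p / 2) ≤ 1 * e ^ p :=
        mul_le_mul' tsub_le_self (max_le (mul_le_of_le_one_left zero_le hβ)
          (div_le_self zero_le one_le_two))
    _ = e ^ p := one_mul _

theorem gregusBound_zero_zero_pos (ha : a < 1) {e : ℝ≥0} (he : 0 < e) :
    0 < gregusBound a α β p 0 0 e 0 e := by
  have hpos : 0 < (1 - a) * ((0 ^ p + e ^ p) / 2) := mul_pos (tsub_pos_of_lt ha) (by positivity)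
  exact hpos.trans_le (le_add_left (by gcongr; exact le_max_right _ _))

theorem eq_zero_of_pow_le_apply_gregusBound_diag {F : ℝ≥0 → ℝ≥0} (hF : ∀ s, 0 < s → F s < s)
    (hp : p ≠ 0) (ha : a ≤ 1) {e : ℝ≥0} (H : e ^ p ≤ F (gregusBound a α β p e 0 0 e e)) :
    e = 0 := by
  rw [gregusBound_diag hp ha] at H
  exact pow_eq_zero_iff hp |>.mp (eq_zero_of_le_apply hF H)

end gregusBound

def IsGregusContraction {X : Type*} [MetricSpace X] (f g h : X → X) (a α β : ℝ≥0) (p : ℕ)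
    (F : ℝ≥0 → ℝ≥0) : Prop :=
  ∀ x y, nndist (f x) (g y) ^ p ≤ F (gregusBound a α β p (nndist (h x) (h y))
    (nndist (f x) (h x)) (nndist (g y) (h y)) (nndist (f x) (h y)) (nndist (h x) (g y)))

namespace IsGregusContraction

variable {X : Type*} [MetricSpace X] {f g h : X → X} {a α β : ℝ≥0} {p : ℕ} {F : ℝ≥0 → ℝ≥0}

theorem apply_eq_of_tendsto (hT : IsGregusContraction f g h a α β p F)
    (hF : ∀ s, 0 < s → F s < s) (hFusc : UpperSemicontinuous F) (hp : p ≠ 0) (ha : a ≤ 1)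
    {x : ℕ → X} {t u : X} (hfx : Tendsto (fun n => f (x n)) atTop (𝓝 t))
    (hhx : Tendsto (fun n => h (x n)) atTop (𝓝 t)) (hghu : g u = h u) : h u = t := by
  have hbound : ∀ n, nndist (f (x n)) (h u) ^ p ≤ F (gregusBound a α β p
      (nndist (h (x n)) (h u)) (nndist (f (x n)) (h (x n))) 0 (nndist (f (x n)) (h u))
      (nndist (h (x n)) (h u))) := by
    intro n
    simpa only [hghu, nndist_self] using hT (x n) u
  have hfh : Tendsto (fun n => nndist (f (x n)) (h (x n))) atTop (𝓝 0) := by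
    simpa only [nndist_self] using hfx.nndist hhx
  have hfu := hfx.nndist (tendsto_const_nhds (x := h u))
  have hhu := hhx.nndist (tendsto_const_nhds (x := h u))
  have H := hFusc.le_of_tendsto (hfu.pow p) (hhu.gregusBound hfh tendsto_const_nhds hfu hhu)
    (Eventually.of_forall hbound)
  exact (nndist_eq_zero.mp (eq_zero_of_pow_le_apply_gregusBound_diag hF hp ha H)).symm

theorem apply_left_eq_self (hT : IsGregusContraction f g h a α β p F)
    (hF : ∀ s, 0 < s → F s < s) (hp : p ≠ 0) (ha : a ≤ 1) {t u : X} (hfht : f t = h t)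
    (hhu : h u = t) (hgu : g u = t) : f t = t := by
  have H := hT t u
  rw [hgu, hhu, ← hfht] at H
  simp only [nndist_self] at H
  exact nndist_eq_zero.mp (eq_zero_of_pow_le_apply_gregusBound_diag hF hp ha H)

theorem apply_right_eq_self (hT : IsGregusContraction f g h a α β p F)
    (hF : ∀ s, 0 < s → F s < s) (hp : p ≠ 0) (ha : a < 1) (hβ : β ≤ 1) {t : X}
    (hft : f t = t) (hht : h t = t) : g t = t := by
  have H := hT t t
  rw [hft, hht, nndist_comm t (g t)] at H
  simp only [nndist_self] at H
  by_contra hne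
  have hpos := gregusBound_zero_zero_pos (α := α) (β := β) (p := p) ha
    (pos_iff_ne_zero.mpr (mt nndist_eq_zero.mp hne))
  exact (H.trans_lt (hF _ hpos)).not_ge (gregusBound_zero_zero_le hp hβ _)

theorem eq_of_apply_eq_self (hT : IsGregusContraction f g h a α β p F)
    (hF : ∀ s, 0 < s → F s < s) (hp : p ≠ 0) (ha : a ≤ 1) {s t : X} (hfs : f s = s)
    (hhs : h s = s) (hgt : g t = t) (hht : h t = t) : s = t := by
  have H := hT s t
  rw [hfs, hhs, hgt, hht] at H
  simp only [nndist_self] at H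
  exact nndist_eq_zero.mp (eq_zero_of_pow_le_apply_gregusBound_diag hF hp ha H)

end IsGregusContraction

theorem common_fixed_point_gregus_three_maps_general {X : Type*} [MetricSpace X]
    (f g h : X → X)
    (hfh : SubcompSubseqCont f h) (hgh : SubcompSubseqCont g h)
    (a α β : ℝ≥0) (ha1 : a < 1)
    (hβ : 0 < β ∧ β ≤ 1)
    (p : ℕ) (hp : 0 < p)
    (F : ℝ≥0 → ℝ≥0) (hFusc : UpperSemicontinuous F)
    (hF : ∀ t : ℝ≥0, 0 < t → F t < t)
    (hineq : ∀ x y : X,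
      nndist (f x) (g y) ^ p ≤
        F (a * nndist (h x) (h y) ^ p + (1 - a) *
          max (max (max (max (α * nndist (f x) (h x) ^ p)
            (β * nndist (g y) (h y) ^ p))
            (nndist (f x) (h x) ^ ((p : ℝ) / 2) * nndist (f x) (h y) ^ ((p : ℝ) / 2)))
            (nndist (f x) (h y) ^ ((p : ℝ) / 2) * nndist (h x) (g y) ^ ((p : ℝ) / 2)))
            ((nndist (f x) (h x) ^ p + nndist (g y) (h y) ^ p) / 2))) :
    ∃! t : X, f t = t ∧ g t = t ∧ h t = t := by
  have hT : IsGregusContraction f g h a α β p F := hineq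
  obtain ⟨x, t, hfx, hhx, hfht⟩ := hfh.exists_tendsto_coincidence
  obtain ⟨-, u, -, -, hghu⟩ := hgh.exists_tendsto_coincidence
  have hhu : h u = t := hT.apply_eq_of_tendsto hF hFusc hp.ne' ha1.le hfx hhx hghu
  have hft : f t = t := hT.apply_left_eq_self hF hp.ne' ha1.le hfht hhu (hghu.trans hhu)
  have hht : h t = t := hfht.symm.trans hft
  have hgt : g t = t := hT.apply_right_eq_self hF hp.ne' ha1 hβ.2 hft hht
  exact ⟨t, ⟨hft, hgt, hht⟩, fun s ⟨hfs, _, hhs⟩ =>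
    hT.eq_of_apply_eq_self hF hp.ne' ha1.le hfs hhs hgt hht⟩

theorem common_fixed_point_gregus_three_maps {X : Type*} [MetricSpace X]
    (f g h : X → X)
    (hfh : SubcompSubseqCont f h) (hgh : SubcompSubseqCont g h)
    (a α β : ℝ≥0) (ha0 : 0 < a) (ha1 : a < 1)
    (hα : 0 < α ∧ α ≤ 1) (hβ : 0 < β ∧ β ≤ 1)
    (p : ℕ) (hp : 0 < p)
    (F : ℝ≥0 → ℝ≥0) (hFusc : UpperSemicontinuous F)
    (hF : ∀ t : ℝ≥0, 0 < t → F t < t)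
    (hineq : ∀ x y : X,
      nndist (f x) (g y) ^ p ≤
        F (a * nndist (h x) (h y) ^ p + (1 - a) *
          max (max (max (max (α * nndist (f x) (h x) ^ p)
            (β * nndist (g y) (h y) ^ p))
            (nndist (f x) (h x) ^ ((p : ℝ) / 2) * nndist (f x) (h y) ^ ((p : ℝ) / 2)))
            (nndist (f x) (h y) ^ ((p : ℝ) / 2) * nndist (h x) (g y) ^ ((p : ℝ) / 2)))
            ((nndist (f x) (h x) ^ p + nndist (g y) (h y) ^ p) / 2))) :
    ∃! t : X, f t = t ∧ g t = t ∧ h t = t :=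
  common_fixed_point_gregus_three_maps_general f g h hfh hgh a α β ha1 hβ p hp F hFusc hF hineq
end
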